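/- arXiv:1606.00049 — 5 statements merged into one kernel-verified Lean document; each statement's English description precedes it below -/
import Mathlib

section
/- Let G be a finite group and n a positive integer dividing |G|. Then n divides the cardinality of the set G(n) = {g ∈ G : g^n = 1}. -/
/-!
Let `p` be a prime with `n * p ∣ |G|` and write `n = p ^ b * u` with `p ∤ u`; by descending
induction on `n`, `n * p` divides the number of solutions of `x ^ (n * p) = 1`. Splitting `x` into
commuting parts of orders dividing `p ^ (b + 1)` and `u`, the solutions of `x ^ (n * p) = 1` that
are not solutions of `x ^ n = 1` are counted by `∑ |C_G(y)(u)|` over the elements `y` of order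
`p ^ (b + 1)`, where `C_G(y)(u)` is the set of `u`-th roots of unity in the centralizer of `y`.
The units of `ZMod (p ^ (b + 1))` act freely on these `y` by powering without changing `C_G(y)`,
so `φ (p ^ (b + 1)) = p ^ b * (p - 1)` divides the sum. Grouping the sum by conjugacy classes
instead, every class contributes `|G : C_G(y)| * |C_G(y)(u)|`; since `y` is central in `C_G(y)`
of order prime to `u`, `|C_G(y)(u)| = |(C_G(y) / ⟨y⟩)(u')|` with `u' = gcd u |C_G(y)|`, which
`u'` divides by induction on `|G|`, and `u ∣ |G : C_G(y)| * u'`. Hence `n = p ^ b * u` divides the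
sum.
-/

open Subgroup MulAction

universe u

theorem dvd_sum_of_dvd_index_stabilizer_mul {K X : Type*} [Group K] [MulAction K X] [Fintype X]
    {f : X → ℕ} (hf : ∀ (k : K) x, f (k • x) = f x) {d : ℕ}
    (hd : ∀ x, d ∣ (stabilizer K x).index * f x) : d ∣ ∑ x, f x := by
  classical
  have := Fintype.ofFinite (orbitRel.Quotient K X)
  rw [← (selfEquivSigmaOrbits K X).symm.sum_comp, Fintype.sum_sigma]
  refine Finset.dvd_sum fun ω _ => ?_
  have hconst : ∀ y : orbit K ω.out, f y = f ω.out := by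
    rintro ⟨_, k, rfl⟩
    exact hf k _
  change d ∣ ∑ y : orbit K ω.out, f y
  rw [Fintype.sum_congr _ _ hconst, Finset.sum_const, Finset.card_univ, smul_eq_mul,
    ← Nat.card_eq_fintype_card, Nat.card_coe_set_eq, ← index_stabilizer]
  exact hd _

section RootsOfUnity

variable {G : Type*} [Group G]

theorem card_pow_gcd_card_eq_one (n : ℕ) :
    Nat.card {x : G // x ^ n.gcd (Nat.card G) = 1} = Nat.card {x : G // x ^ n = 1} :=
  Nat.card_congr <| Equiv.subtypeEquivRight fun x => by simp [pow_card_eq_one']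

theorem card_mem_and_pow_eq_one (H : Subgroup G) (n : ℕ) :
    Nat.card {z : G // z ∈ H ∧ z ^ n = 1} = Nat.card {z : H // z ^ n = 1} :=
  Nat.card_congr <| (Equiv.subtypeSubtypeEquivSubtypeInter (· ∈ H) (· ^ n = 1)).symm.trans
    (Equiv.subtypeEquivRight fun z => by simp [Subtype.ext_iff])

theorem Subgroup.normal_of_le_center {Z : Subgroup G} (hZ : Z ≤ center G) : Z.Normal where
  conj_mem z hz g := by rwa [mem_center_iff.mp (hZ hz) g, mul_inv_cancel_right]

theorem card_pow_eq_one_quotient_of_le_center (Z : Subgroup G) [Z.Normal] (hZ : Z ≤ center G)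
    {n : ℕ} (hn : (Nat.card Z).Coprime n) :
    Nat.card {x : G ⧸ Z // x ^ n = 1} = Nat.card {x : G // x ^ n = 1} := by
  have hcomm : ∀ x : G, ∀ z ∈ Z, Commute x z := fun x z hz => mem_center_iff.mp (hZ hz) x
  have hpow := (powCoprime hn).bijective
  refine (Nat.card_congr (Equiv.ofBijective (fun x => ⟨x.1, by
    rw [← QuotientGroup.mk_pow, x.2, QuotientGroup.mk_one]⟩) ⟨?_, ?_⟩)).symm
  · rintro ⟨x, hx⟩ ⟨y, hy⟩ hxy
    obtain ⟨z, hz, rfl⟩ : ∃ z ∈ Z, y = x * z :=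
      ⟨_, QuotientGroup.eq.mp (congrArg Subtype.val hxy), (mul_inv_cancel_left x y).symm⟩
    rw [(hcomm x z hz).mul_pow, hx, one_mul] at hy
    have : (⟨z, hz⟩ : Z) = 1 := hpow.injective (a₂ := 1) (Subtype.ext (by simpa using hy))
    simp [show z = 1 from congrArg Subtype.val this]
  · rintro ⟨w, hw⟩
    obtain ⟨x, rfl⟩ := QuotientGroup.mk_surjective w
    have hxZ : x ^ n ∈ Z := by rwa [← QuotientGroup.eq_one_iff, QuotientGroup.mk_pow]
    obtain ⟨t, ht⟩ := hpow.surjective ⟨x ^ n, hxZ⟩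
    have ht : (t : G) ^ n = x ^ n := congrArg Subtype.val ht
    refine ⟨⟨x * (t : G)⁻¹, ?_⟩, Subtype.ext ?_⟩
    · rw [(hcomm x _ (inv_mem t.2)).mul_pow, inv_pow, ht, mul_inv_cancel]
    · exact QuotientGroup.eq.mpr (by simp [t.2])

end RootsOfUnity

section Bezout

variable {G : Type*} [Group G] {m u : ℕ}

theorem zpow_gcdB_mul_zpow_gcdA (hmu : m.Coprime u) (x : G) :
    x ^ (u * m.gcdB u : ℤ) * x ^ (m * m.gcdA u : ℤ) = x := by
  rw [← zpow_add, add_comm, ← Nat.gcd_eq_gcd_ab, hmu.gcd_eq_one, Nat.cast_one, zpow_one]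

theorem pow_zpow_mul_eq_one {x : G} {n : ℕ} (hx : x ^ (m * n) = 1) (k : ℤ) :
    (x ^ (n * k)) ^ m = 1 := by
  rw [← zpow_natCast, ← zpow_mul, show (n * k * m : ℤ) = (m * n : ℕ) * k by push_cast; ring,
    zpow_mul, zpow_natCast, hx, one_zpow]

def sigmaCentralizerEquivOfCoprime (hmu : m.Coprime u) :
    {x : G // x ^ (m * u) = 1} ≃
      Σ y : {y : G // y ^ m = 1}, {z : G // z ∈ centralizer {(y : G)} ∧ z ^ u = 1} where
  toFun x := ⟨⟨x ^ (u * m.gcdB u : ℤ), pow_zpow_mul_eq_one x.2 _⟩, x ^ (m * m.gcdA u : ℤ),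
    mem_centralizer_singleton_iff.mpr ((Commute.refl x.1).zpow_zpow _ _),
    pow_zpow_mul_eq_one (mul_comm m u ▸ x.2) _⟩
  invFun yz := ⟨yz.1 * yz.2, by
    rw [(Commute.symm (mem_centralizer_singleton_iff.mp yz.2.2.1)).mul_pow, pow_mul, yz.1.2,
      one_pow, one_mul, mul_comm, pow_mul, yz.2.2.2, one_pow]⟩
  left_inv x := Subtype.ext (zpow_gcdB_mul_zpow_gcdA hmu x.1)
  right_inv := by
    rintro ⟨⟨y, hy⟩, z, hyz, hz⟩
    have hyz : Commute y z := (mem_centralizer_singleton_iff.mp hyz).symm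
    refine Sigma.subtype_ext (Subtype.ext ?_) ?_ <;> dsimp only
    · rw [hyz.mul_zpow, zpow_mul z, zpow_natCast, hz, one_zpow, mul_one]
      conv_rhs => rw [← zpow_gcdB_mul_zpow_gcdA hmu y]
      rw [zpow_mul y m, zpow_natCast, hy, one_zpow, mul_one]
    · rw [hyz.mul_zpow, zpow_mul y m, zpow_natCast, hy, one_zpow, one_mul]
      conv_rhs => rw [← zpow_gcdB_mul_zpow_gcdA hmu z]
      rw [zpow_mul z u, zpow_natCast, hz, one_zpow, one_mul]

theorem card_pow_mul_eq_one_eq_sum_centralizer [Fintype G] [DecidableEq G] (hmu : m.Coprime u) :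
    Nat.card {x : G // x ^ (m * u) = 1} =
      ∑ y : G with y ^ m = 1, Nat.card {z : G // z ∈ centralizer {y} ∧ z ^ u = 1} := by
  rw [Nat.card_congr (sigmaCentralizerEquivOfCoprime hmu), Nat.card_sigma]
  exact (Finset.sum_subtype _ (fun y => Finset.mem_filter_univ y)
    (fun y => Nat.card {z : G // z ∈ centralizer {y} ∧ z ^ u = 1})).symm

end Bezout

section Centralizer

variable {G : Type*} [Group G]

theorem zpow_gcdA_pow_eq_self {y : G} {k : ℕ} (hk : k.Coprime (orderOf y)) :
    (y ^ k) ^ k.gcdA (orderOf y) = y := by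
  conv_rhs => rw [← zpow_one y, ← Nat.cast_one, ← hk.gcd_eq_one, Nat.gcd_eq_gcd_ab, zpow_add,
    zpow_mul, zpow_mul, zpow_natCast, zpow_natCast, pow_orderOf_eq_one, one_zpow, mul_one]

theorem centralizer_singleton_pow_of_coprime {y : G} {k : ℕ} (hk : k.Coprime (orderOf y)) :
    centralizer {y ^ k} = centralizer {y} := by
  refine le_antisymm (fun z hz => ?_) (fun z hz => ?_) <;>
    rw [mem_centralizer_singleton_iff] at hz ⊢
  · rw [← zpow_gcdA_pow_eq_self hk]
    exact Commute.zpow_right hz _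
  · exact Commute.pow_right hz k

theorem card_pow_eq_one_centralizer_conj (u : ℕ) (g y : G) :
    Nat.card {z : G // z ∈ centralizer {g * y * g⁻¹} ∧ z ^ u = 1} =
      Nat.card {z : G // z ∈ centralizer {y} ∧ z ^ u = 1} :=
  (Nat.card_congr ((MulAut.conj g).toEquiv.subtypeEquiv fun z => by
    simp [mem_centralizer_singleton_iff])).symm

theorem index_stabilizer_conjAct (y : G) :
    (stabilizer (ConjAct G) y).index = (centralizer {y}).index := by
  rw [centralizer_eq_comap_stabilizer]
  exact (index_comap_of_surjective _ ConjAct.toConjAct.surjective).symm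

theorem dvd_sum_orderOf_eq_of_dvd_index_centralizer_mul [Fintype G] [DecidableEq G] (M : ℕ)
    {f : G → ℕ} (hf : ∀ g y, f (g * y * g⁻¹) = f y) {d : ℕ}
    (hd : ∀ y, orderOf y = M → d ∣ (centralizer {y}).index * f y) :
    d ∣ ∑ y : G with orderOf y = M, f y := by
  rw [Finset.sum_filter]
  refine dvd_sum_of_dvd_index_stabilizer_mul (K := ConjAct G) (fun k y => ?_) fun y => ?_
  · rw [ConjAct.smul_def, hf, ← MulAut.conj_apply, MulEquiv.orderOf_eq]
  · rw [index_stabilizer_conjAct]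
    split_ifs with hy
    · exact hd y hy
    · simp

instance (M : ℕ) : MulAction (ZMod M)ˣ {y : G // orderOf y = M} where
  smul k y := ⟨y ^ (k : ZMod M).val, by
    rw [Nat.Coprime.orderOf_pow (by rw [y.2]; exact (ZMod.val_coe_unit_coprime k).symm), y.2]⟩
  one_smul y := Subtype.ext <| by
    show (y : G) ^ ((1 : (ZMod M)ˣ) : ZMod M).val = y
    conv_rhs => rw [← pow_one (y : G)]
    rw [pow_eq_pow_iff_modEq, y.2, Units.val_one, ZMod.val_one_eq_one_mod]
    exact Nat.mod_modEq _ _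
  mul_smul a b y := Subtype.ext <| by
    show (y : G) ^ ((a * b : (ZMod M)ˣ) : ZMod M).val =
      ((y : G) ^ (b : ZMod M).val) ^ (a : ZMod M).val
    rw [← pow_mul, pow_eq_pow_iff_modEq, y.2, Units.val_mul, ZMod.val_mul, mul_comm]
    exact Nat.mod_modEq _ _

theorem stabilizer_units_eq_bot (M : ℕ) [NeZero M] (y : {y : G // orderOf y = M}) :
    stabilizer (ZMod M)ˣ y = ⊥ := by
  refine eq_bot_iff.mpr fun k hk => ?_
  have : (y : G) ^ (k : ZMod M).val = (y : G) ^ 1 := by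
    rw [pow_one]
    exact congrArg Subtype.val hk
  rw [pow_eq_pow_iff_modEq, y.2, ← ZMod.natCast_eq_natCast_iff, ZMod.natCast_zmod_val,
    Nat.cast_one] at this
  exact Units.ext this

theorem totient_dvd_sum_orderOf_eq [Fintype G] [DecidableEq G] (M : ℕ) [NeZero M] (f : G → ℕ)
    (hf : ∀ y k, orderOf y = M → k.Coprime M → f (y ^ k) = f y) :
    M.totient ∣ ∑ y : G with orderOf y = M, f y := by
  rw [Finset.sum_subtype _ (fun y => Finset.mem_filter_univ y) f]
  refine dvd_sum_of_dvd_index_stabilizer_mul (K := (ZMod M)ˣ)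
    (f := fun y : {y : G // orderOf y = M} => f y)
    (fun k y => hf y _ y.2 (ZMod.val_coe_unit_coprime k)) fun y => ?_
  rw [stabilizer_units_eq_bot, index_bot, Nat.card_eq_fintype_card, ZMod.card_units_eq_totient]
  exact dvd_mul_right _ _

theorem sum_pow_prime_pow_succ_eq_one {M : Type*} [AddCommMonoid M] [Fintype G] [DecidableEq G]
    {p : ℕ} [Fact p.Prime] (b : ℕ) (f : G → M) :
    ∑ y : G with y ^ p ^ (b + 1) = 1, f y =
      ∑ y : G with y ^ p ^ b = 1, f y + ∑ y : G with orderOf y = p ^ (b + 1), f y := by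
  rw [← Finset.sum_filter_add_sum_filter_not _ (fun y => y ^ p ^ b = 1), Finset.filter_filter,
    Finset.filter_filter]
  congr 2 <;> ext y <;> simp only [Finset.mem_filter_univ]
  · exact and_iff_right_of_imp fun h => by rw [pow_succ, pow_mul, h, one_pow]
  · refine ⟨fun h => orderOf_eq_prime_pow h.2 h.1,
      fun h => ⟨h ▸ pow_orderOf_eq_one y, fun h' => ?_⟩⟩
    have := orderOf_dvd_of_pow_eq_one h'
    rw [h, Nat.pow_dvd_pow_iff_le_right (Fact.out : p.Prime).one_lt] at this
    omega

end Centralizer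

section Induction

variable {G : Type u} [Group G] [Finite G]

theorem dvd_index_centralizer_mul_card
    (IH : ∀ (H : Type u) [Group H] [Finite H], Nat.card H < Nat.card G →
      ∀ k, k ∣ Nat.card H → k ∣ Nat.card {x : H // x ^ k = 1})
    {y : G} (hy : 1 < orderOf y) {u : ℕ} (hyu : (orderOf y).Coprime u) (hu : u ∣ Nat.card G) :
    u ∣ (centralizer {y}).index * Nat.card {z : G // z ∈ centralizer {y} ∧ z ^ u = 1} := by
  set C := centralizer {y}
  let ŷ : C := ⟨y, mem_centralizer_singleton_iff.mpr rfl⟩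
  have hZ : zpowers ŷ ≤ center C :=
    zpowers_le.mpr (mem_center_iff.mpr fun z => Subtype.ext (mem_centralizer_singleton_iff.mp z.2))
  have := normal_of_le_center hZ
  have hcardC : Nat.card C = Nat.card (C ⧸ zpowers ŷ) * orderOf y := by
    rw [card_eq_card_quotient_mul_card_subgroup (zpowers ŷ), Nat.card_zpowers, orderOf_mk]
  set u' := u.gcd (Nat.card C)
  have hu'y : (orderOf y).Coprime u' := hyu.coprime_dvd_right (Nat.gcd_dvd_left _ _)
  have hroots : Nat.card {z : G // z ∈ C ∧ z ^ u = 1} =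
      Nat.card {w : C ⧸ zpowers ŷ // w ^ u' = 1} := by
    rw [card_pow_eq_one_quotient_of_le_center _ hZ (by rwa [Nat.card_zpowers, orderOf_mk]),
      card_pow_gcd_card_eq_one, card_mem_and_pow_eq_one]
  have hlt : Nat.card (C ⧸ zpowers ŷ) < Nat.card G :=
    calc Nat.card (C ⧸ zpowers ŷ) < Nat.card C := by
          rw [hcardC]
          exact lt_mul_of_one_lt_right Nat.card_pos hy
      _ ≤ Nat.card G := card_le_card_group C
  have hu'Q : u' ∣ Nat.card (C ⧸ zpowers ŷ) :=
    hu'y.symm.dvd_of_dvd_mul_right (hcardC ▸ Nat.gcd_dvd_right _ _)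
  have hu_index : u ∣ C.index * u' := by
    rw [← Nat.gcd_mul_left]
    exact Nat.dvd_gcd (dvd_mul_left u _) (C.index_mul_card ▸ hu)
  rw [hroots]
  exact hu_index.trans (mul_dvd_mul_left _ (IH _ hlt u' hu'Q))

theorem dvd_card_pow_eq_one_of_dvd_card_pow_mul_prime
    (IH : ∀ (H : Type u) [Group H] [Finite H], Nat.card H < Nat.card G →
      ∀ k, k ∣ Nat.card H → k ∣ Nat.card {x : H // x ^ k = 1})
    {n p : ℕ} (hp : p.Prime) (hn : n ∣ Nat.card G)
    (hnp : n * p ∣ Nat.card {x : G // x ^ (n * p) = 1}) :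
    n ∣ Nat.card {x : G // x ^ n = 1} := by
  classical
  have := Fintype.ofFinite G
  have := Fact.mk hp
  obtain ⟨b, u, hpu, rfl⟩ :=
    Nat.exists_eq_pow_mul_and_not_dvd (ne_zero_of_dvd_ne_zero Nat.card_pos.ne' hn) p hp.ne_one
  have hcop : ∀ k, (p ^ k).Coprime u := fun k => (hp.coprime_iff_not_dvd.mpr hpu).pow_left k
  set f : G → ℕ := fun y => Nat.card {z : G // z ∈ centralizer {y} ∧ z ^ u = 1}
  have hsucc : Nat.card {x : G // x ^ (p ^ b * u * p) = 1} =
      Nat.card {x : G // x ^ (p ^ b * u) = 1} + ∑ y : G with orderOf y = p ^ (b + 1), f y := by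
    rw [show p ^ b * u * p = p ^ (b + 1) * u by ring,
      card_pow_mul_eq_one_eq_sum_centralizer (hcop _),
      card_pow_mul_eq_one_eq_sum_centralizer (hcop _)]
    exact sum_pow_prime_pow_succ_eq_one b f
  have hpb : p ^ b ∣ ∑ y : G with orderOf y = p ^ (b + 1), f y := by
    refine (Dvd.intro _ (Nat.totient_prime_pow_succ hp b).symm).trans
      (totient_dvd_sum_orderOf_eq _ f fun y k hy hk => ?_)
    simp only [f, centralizer_singleton_pow_of_coprime (hy ▸ hk)]
  have hu : u ∣ ∑ y : G with orderOf y = p ^ (b + 1), f y :=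
    dvd_sum_orderOf_eq_of_dvd_index_centralizer_mul _ (card_pow_eq_one_centralizer_conj u)
      fun y hy => dvd_index_centralizer_mul_card IH
        (hy ▸ Nat.one_lt_pow b.succ_ne_zero hp.one_lt) (hy ▸ hcop _) (dvd_of_mul_left_dvd hn)
  rw [hsucc] at hnp
  exact (Nat.dvd_add_left ((hcop b).mul_dvd_of_dvd_of_dvd hpb hu)).mp (dvd_of_mul_right_dvd hnp)

theorem dvd_card_pow_eq_one_of_forall_card_lt
    (IH : ∀ (H : Type u) [Group H] [Finite H], Nat.card H < Nat.card G →
      ∀ k, k ∣ Nat.card H → k ∣ Nat.card {x : H // x ^ k = 1})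
    {n : ℕ} (hn : n ∣ Nat.card G) : n ∣ Nat.card {x : G // x ^ n = 1} := by
  obtain ⟨m, hm⟩ := hn
  induction m using Nat.strong_induction_on generalizing n with
  | _ m IHm =>
    obtain rfl | hm1 := eq_or_ne m 1
    · rw [mul_one] at hm
      rw [← hm, Nat.card_congr (Equiv.subtypeUnivEquiv fun _ => pow_card_eq_one')]
    set p := m.minFac
    have hp : p.Prime := Nat.minFac_prime hm1
    obtain ⟨m', hpm'⟩ : p ∣ m := m.minFac_dvd
    have hm' : m' < m := by
      have hm0 : m ≠ 0 := by
        rintro rfl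
        exact Nat.card_pos.ne' (by simpa using hm)
      rw [hpm'] at hm0 ⊢
      exact lt_mul_left (Nat.pos_of_ne_zero (right_ne_zero_of_mul hm0)) hp.one_lt
    exact dvd_card_pow_eq_one_of_dvd_card_pow_mul_prime IH hp (Dvd.intro _ hm.symm)
      (IHm m' hm' (by rw [hm, hpm']; ring))

end Induction

theorem dvd_card_pow_eq_one {G : Type u} [Group G] [Finite G] {n : ℕ} (hn : n ∣ Nat.card G) :
    n ∣ Nat.card {x : G // x ^ n = 1} := by
  induction hN : Nat.card G using Nat.strong_induction_on generalizing G n with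
  | _ N IH =>
    subst hN
    exact dvd_card_pow_eq_one_of_forall_card_lt (fun H _ _ hH _ hk => IH _ hH hk rfl) hn

theorem frobenius_divisibility_general (G : Type*) [Group G] [Fintype G] (n : ℕ)
    (hdvd : n ∣ Fintype.card G) :
    n ∣ Nat.card {g : G // g ^ n = 1} :=
  dvd_card_pow_eq_one (Nat.card_eq_fintype_card (α := G) ▸ hdvd)

/-- Frobenius's divisibility theorem (special case): if `n` divides the order of a
finite group `G`, then `n` divides the number of elements `g` with `g ^ n = 1`. -/
theorem frobenius_divisibility (G : Type*) [Group G] [Fintype G] (n : ℕ) (hn : 0 < n)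
    (hdvd : n ∣ Fintype.card G) :
    n ∣ Nat.card {g : G // g ^ n = 1} :=
  frobenius_divisibility_general G n hdvd
end

section
/- Let G be a finite group of order n and t a positive integer. Then the number of elements of G whose order is a multiple of t is either zero or a multiple of the greatest divisor of n that is coprime to t. -/
/-!
Put `a = |G| / D`; the maximality of `D` forces `gcd(a, D) = 1`. By the Chinese remainder theorem
every element is uniquely a commuting product `u * v` with `u ^ a = 1` and `v ^ D = 1`, and
`t ∣ ord(u * v)` iff `t ∣ ord u` because `ord v` is prime to `t`. So the count is a sum, over such
`u` with `t ∣ ord u`, of the number of solutions of `v ^ D = 1` in the centralizer `C(u)`, and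
grouping conjugate `u` multiplies each term by `[G : C(u)]`. It then suffices that, for coprime
`a` and `b`, `gcd(b, |H|)` divides the number of solutions of `v ^ b = 1` in every group `H` whose
order divides `a * b` (a case of Frobenius' theorem). That follows by induction on `|H|` from the
same decomposition of `H`: noncentral `u` contribute multiples of `gcd(b, |H|)`, and the central
ones contribute the number of solutions times the order of a group of exponent dividing `a`,
which is prime to `b`.
-/

open Finset Subgroup

section CoprimeComponent

variable {G : Type*} [Group G] {a b : ℕ}

/-- The factor `u` of `x = u * v` with `u ^ a = 1`, `v ^ b = 1`; the factor `v` is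
`coprimeComponent hab.symm x`. -/
def coprimeComponent (hab : a.Coprime b) (x : G) : G :=
  x ^ (Nat.chineseRemainder hab 1 0 : ℕ)

theorem coprimeComponent_pow_eq_one (hab : a.Coprime b) {x : G} (hx : x ^ (a * b) = 1) :
    coprimeComponent hab x ^ a = 1 := by
  obtain ⟨c, hc⟩ :=
    Nat.mul_dvd_mul_left a (Nat.modEq_zero_iff_dvd.1 (Nat.chineseRemainder hab 1 0).2.2)
  rw [coprimeComponent, ← pow_mul, mul_comm, hc, pow_mul, hx, one_pow]

theorem coprimeComponent_mul_coprimeComponent (hab : a.Coprime b) {x : G}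
    (hx : x ^ (a * b) = 1) : coprimeComponent hab x * coprimeComponent hab.symm x = x := by
  have h₁ := (Nat.chineseRemainder hab 1 0).2
  have h₂ := (Nat.chineseRemainder hab.symm 1 0).2
  have hsum : (Nat.chineseRemainder hab 1 0 : ℕ) + Nat.chineseRemainder hab.symm 1 0 ≡ 1
      [MOD a * b] :=
    (Nat.modEq_and_modEq_iff_modEq_mul hab).1
      ⟨by simpa using h₁.1.add h₂.2, by simpa using h₁.2.add h₂.1⟩
  rw [coprimeComponent, coprimeComponent, ← pow_add, pow_eq_pow_of_modEq hsum hx, pow_one]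

theorem commute_coprimeComponent (hab : a.Coprime b) (x : G) :
    Commute (coprimeComponent hab x) (coprimeComponent hab.symm x) :=
  Commute.pow_pow_self x _ _

theorem coprimeComponent_mul (hab : a.Coprime b) {u v : G} (huv : Commute u v)
    (hu : u ^ a = 1) (hv : v ^ b = 1) : coprimeComponent hab (u * v) = u := by
  have h := (Nat.chineseRemainder hab 1 0).2
  rw [coprimeComponent, huv.mul_pow, pow_eq_pow_of_modEq h.1 hu, pow_eq_pow_of_modEq h.2 hv,
    pow_one, pow_zero, mul_one]

theorem coprimeComponent_symm_mul (hab : a.Coprime b) {u v : G} (huv : Commute u v)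
    (hu : u ^ a = 1) (hv : v ^ b = 1) : coprimeComponent hab.symm (u * v) = v := by
  rw [huv.eq]
  exact coprimeComponent_mul hab.symm huv.symm hv hu

theorem card_coprimeComponent_fiber (hab : a.Coprime b) (hG : ∀ x : G, x ^ (a * b) = 1)
    {u : G} (hu : u ^ a = 1) :
    Nat.card {x // coprimeComponent hab x = u} = Nat.card {v : centralizer {u} // v ^ b = 1} := by
  have hv (x : G) : coprimeComponent hab.symm x ^ b = 1 :=
    coprimeComponent_pow_eq_one hab.symm (by rw [mul_comm]; exact hG x)
  have hcomm (v : centralizer {u}) : Commute u v := (mem_centralizer_singleton_iff.1 v.2).symm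
  exact Nat.card_congr
    { toFun x := ⟨⟨coprimeComponent hab.symm x, mem_centralizer_singleton_iff.2 <| by
          simpa only [x.2] using (commute_coprimeComponent hab x.1).symm.eq⟩, Subtype.ext (hv x)⟩
      invFun v := ⟨u * v, coprimeComponent_mul hab (hcomm v) hu (congrArg Subtype.val v.2)⟩
      left_inv x := Subtype.ext <| by
        simpa only [x.2] using coprimeComponent_mul_coprimeComponent hab (hG x)
      right_inv v := Subtype.ext <| Subtype.ext <|
        coprimeComponent_symm_mul hab (hcomm v) hu (congrArg Subtype.val v.2) }

theorem card_eq_sum_card_centralizer [Fintype G] [DecidableEq G] (hab : a.Coprime b)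
    (hG : ∀ x : G, x ^ (a * b) = 1) {P Q : G → Prop} [DecidablePred Q]
    (hPQ : ∀ u v, Commute u v → u ^ a = 1 → v ^ b = 1 → (P (u * v) ↔ Q u)) :
    Nat.card {x // P x} =
      ∑ u with u ^ a = 1 ∧ Q u, Nat.card {v : centralizer {u} // v ^ b = 1} := by
  classical
  have hP (x : G) : P x ↔ Q (coprimeComponent hab x) := by
    conv_lhs => rw [← coprimeComponent_mul_coprimeComponent hab (hG x)]
    exact hPQ _ _ (commute_coprimeComponent hab x) (coprimeComponent_pow_eq_one hab (hG x))
      (coprimeComponent_pow_eq_one hab.symm (by rw [mul_comm]; exact hG x))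
  rw [Nat.card_eq_fintype_card, Fintype.card_subtype,
    card_eq_sum_card_fiberwise (f := coprimeComponent hab) (t := {u | u ^ a = 1 ∧ Q u})]
  · refine sum_congr rfl fun u hu => ?_
    rw [mem_filter] at hu
    rw [← card_coprimeComponent_fiber hab hG hu.2.1, Nat.card_eq_fintype_card,
      Fintype.card_subtype, filter_filter]
    congr 1
    exact filter_congr fun x _ => and_iff_right_of_imp fun hx => (hP x).2 (hx ▸ hu.2.2)
  · intro x hx
    simp only [coe_filter, mem_univ, true_and, Set.mem_ofPred_eq] at hx ⊢
    exact ⟨coprimeComponent_pow_eq_one hab (hG x), (hP x).1 hx⟩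

end CoprimeComponent

section ClassSums

variable {G : Type*} [Group G]

theorem IsConj.orderOf_eq {u w : G} (h : IsConj u w) : orderOf u = orderOf w := by
  obtain ⟨c, rfl⟩ := isConj_iff.1 h
  exact ((MulAut.conj c).orderOf_eq u).symm

theorem IsConj.pow_eq_one {u w : G} (h : IsConj u w) {a : ℕ} (hu : u ^ a = 1) : w ^ a = 1 :=
  isConj_one_right.1 (hu ▸ h.pow a)

theorem index_centralizer_eq_ncard_carrier (g : G) :
    (centralizer {g}).index = (ConjClasses.mk g).carrier.ncard := by
  rw [centralizer_eq_comap_stabilizer]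
  exact (index_comap_of_surjective (MulAction.stabilizer (ConjAct G) g)
    ConjAct.toConjAct.surjective).trans <| by
      rw [MulAction.index_stabilizer, ConjAct.orbit_eq_carrier_conjClasses]

theorem dvd_sum_of_dvd_index_mul [Fintype G] {F : G → ℕ} (hF : ∀ u w, IsConj u w → F u = F w)
    {m : ℕ} (hm : ∀ u, m ∣ (centralizer {u}).index * F u) : m ∣ ∑ u, F u := by
  classical
  rw [← sum_fiberwise univ ConjClasses.mk F]
  refine dvd_sum fun c _ => ?_
  obtain ⟨g, rfl⟩ := ConjClasses.mk_surjective c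
  have hclass : ∀ u ∈ ({u | ConjClasses.mk u = ConjClasses.mk g} : Finset G), F u = F g :=
    fun u hu => (hF _ _ (ConjClasses.mk_eq_mk_iff_isConj.1 (mem_filter.1 hu).2).symm).symm
  rw [sum_congr rfl hclass, sum_const, smul_eq_mul]
  have hcard : #{u | ConjClasses.mk u = ConjClasses.mk g} = (centralizer {g}).index := by
    rw [index_centralizer_eq_ncard_carrier, Set.ncard_eq_toFinset_card']
    congr 1
    ext u
    simp [ConjClasses.mem_carrier_iff_mk_eq]
  exact hcard ▸ hm g

theorem card_pow_eq_one_congr {H K : Type*} [Group H] [Group K] (e : H ≃* K) (b : ℕ) :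
    Nat.card {v : H // v ^ b = 1} = Nat.card {v : K // v ^ b = 1} :=
  Nat.card_congr <| e.toEquiv.subtypeEquiv fun v => by
    rw [MulEquiv.toEquiv_eq_coe, MulEquiv.coe_toEquiv, ← map_pow, MulEquiv.map_eq_one_iff]

theorem map_conj_centralizer (g u : G) :
    (centralizer {u}).map (MulAut.conj g).toMonoidHom = centralizer {g * u * g⁻¹} := by
  ext x
  rw [Subgroup.mem_map_equiv, mem_centralizer_singleton_iff, mem_centralizer_singleton_iff,
    MulAut.conj_symm_apply]
  change Commute _ _ ↔ Commute _ _
  rw [← Commute.conj_iff g, show g * (g⁻¹ * x * g) * g⁻¹ = x by group]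

theorem card_centralizer_pow_eq_one_of_isConj {u w : G} (h : IsConj u w) (b : ℕ) :
    Nat.card {v : centralizer {u} // v ^ b = 1} = Nat.card {v : centralizer {w} // v ^ b = 1} := by
  obtain ⟨g, rfl⟩ := isConj_iff.1 h
  exact card_pow_eq_one_congr
    (((MulAut.conj g).subgroupMap _).trans (MulEquiv.subgroupCongr (map_conj_centralizer g u))) b

theorem gcd_dvd_sum_card_centralizer [Fintype G] {b : ℕ} (p : G → Prop) [DecidablePred p]
    (hp : ∀ u w, IsConj u w → p u → p w)
    (hb : ∀ u, p u →
      b.gcd (Nat.card (centralizer {u})) ∣ Nat.card {v : centralizer {u} // v ^ b = 1}) :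
    b.gcd (Nat.card G) ∣ ∑ u with p u, Nat.card {v : centralizer {u} // v ^ b = 1} := by
  rw [sum_filter]
  refine dvd_sum_of_dvd_index_mul (fun u w huw => ?_) fun u => ?_
  · exact if_congr ⟨hp u w huw, hp w u huw.symm⟩
      (card_centralizer_pow_eq_one_of_isConj huw b) rfl
  · split_ifs with hu
    · rw [← (centralizer {u}).index_mul_card]
      exact (Nat.gcd_mul_right_dvd_mul_gcd ..).trans
        (mul_dvd_mul (Nat.gcd_dvd_right ..) (hb u hu))
    · simp

end ClassSums

section Frobenius

def centerPowEqOne (H : Type*) [Group H] (a : ℕ) : Subgroup H where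
  carrier := {u | u ^ a = 1 ∧ u ∈ center H}
  one_mem' := ⟨one_pow a, one_mem _⟩
  mul_mem' := fun {u _} ⟨hu, huZ⟩ ⟨hv, hvZ⟩ =>
    ⟨by rw [Commute.mul_pow (mem_center_iff.1 hvZ u), hu, hv, one_mul], mul_mem huZ hvZ⟩
  inv_mem' := fun ⟨hu, huZ⟩ => ⟨by rw [inv_pow, hu, inv_one], inv_mem huZ⟩

variable {a b : ℕ}

theorem coprime_card_of_forall_pow_eq_one {K : Type*} [Group K] [Finite K] (hab : a.Coprime b)
    (hK : ∀ x : K, x ^ a = 1) : (Nat.card K).Coprime b := by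
  refine Nat.coprime_of_dvd fun q hq hqK hqb => ?_
  have := Fact.mk hq
  obtain ⟨x, hx⟩ := exists_prime_orderOf_dvd_card' q hqK
  have hqa : q ∣ a := hx ▸ orderOf_dvd_of_pow_eq_one (hK x)
  exact hq.ne_one (Nat.Coprime.eq_one_of_dvd (Nat.Coprime.of_dvd hqa hqb hab) dvd_rfl)

theorem coprime_card_center_pow_eq_one {H : Type*} [Group H] [Fintype H] [DecidableEq H]
    (hab : a.Coprime b) : (#{u : H | u ^ a = 1 ∧ u ∈ center H}).Coprime b := by
  rw [← Fintype.card_subtype, ← Nat.card_eq_fintype_card]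
  exact coprime_card_of_forall_pow_eq_one (K := centerPowEqOne H a) hab
    fun u => Subtype.ext u.2.1

theorem Subgroup.card_lt_of_ne_top {H : Type*} [Group H] [Finite H] {K : Subgroup H}
    (hK : K ≠ ⊤) : Nat.card K < Nat.card H :=
  K.card_le_card_group.lt_of_ne (mt K.card_eq_iff_eq_top.1 hK)

theorem gcd_dvd_card_pow_eq_one (hab : a.Coprime b) {H : Type*} [Group H] [Finite H]
    (hH : Nat.card H ∣ a * b) : b.gcd (Nat.card H) ∣ Nat.card {v : H // v ^ b = 1} := by
  induction hn : Nat.card H using Nat.strong_induction_on generalizing H with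
  | _ n ih =>
  subst hn
  classical
  have := Fintype.ofFinite H
  have hcount := card_eq_sum_card_centralizer hab
    (fun x : H => orderOf_dvd_iff_pow_eq_one.1 ((orderOf_dvd_natCard x).trans hH))
    (P := fun _ => True) (Q := fun _ => True) fun _ _ _ _ _ => Iff.rfl
  rw [Nat.card_congr (Equiv.subtypeUnivEquiv fun _ => trivial)] at hcount
  simp only [and_true] at hcount
  rw [← sum_filter_add_sum_filter_not _ (· ∈ center H), filter_filter, filter_filter] at hcount
  have hcentral :
      ∑ u with u ^ a = 1 ∧ u ∈ center H, Nat.card {v : centralizer {u} // v ^ b = 1} =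
        #{u : H | u ^ a = 1 ∧ u ∈ center H} * Nat.card {v : H // v ^ b = 1} := by
    rw [← smul_eq_mul, ← sum_const]
    refine sum_congr rfl fun u hu => card_pow_eq_one_congr ((MulEquiv.subgroupCongr ?_).trans
      topEquiv) b
    exact centralizer_eq_top_iff_subset.2 (Set.singleton_subset_iff.2 (mem_filter.1 hu).2.2)
  have hnoncentral : b.gcd (Nat.card H) ∣
      ∑ u with u ^ a = 1 ∧ u ∉ center H, Nat.card {v : centralizer {u} // v ^ b = 1} := by
    refine gcd_dvd_sum_card_centralizer _ (fun u w huw hu => ⟨?_, ?_⟩) fun u hu => ?_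
    · exact huw.pow_eq_one hu.1
    · exact fun hw => hu.2 ((huw.eq_of_right_mem_center hw) ▸ hw)
    · have hC : centralizer {u} ≠ ⊤ :=
        mt centralizer_eq_top_iff_subset.1 (by simpa using hu.2)
      exact ih _ (card_lt_of_ne_top hC) ((card_subgroup_dvd_card _).trans hH) rfl
  rw [hcentral] at hcount
  have hZ : b.gcd (Nat.card H) ∣
      #{u : H | u ^ a = 1 ∧ u ∈ center H} * Nat.card {v : H // v ^ b = 1} :=
    (Nat.dvd_add_left hnoncentral).1 (hcount ▸ Nat.gcd_dvd_right _ _)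
  have hcop : (b.gcd (Nat.card H)).Coprime #{u : H | u ^ a = 1 ∧ u ∈ center H} :=
    ((coprime_card_center_pow_eq_one hab).coprime_dvd_right (Nat.gcd_dvd_left _ _)).symm
  exact hcop.dvd_of_dvd_mul_left hZ

end Frobenius

theorem Nat.coprime_div_of_maximal {n D t : ℕ} (hn : n ≠ 0) (hD : D ∣ n) (hDt : D.Coprime t)
    (hDmax : ∀ d, d ∣ n → d.Coprime t → d ≤ D) : (n / D).Coprime D := by
  refine Nat.coprime_of_dvd fun p hp hpn hpD => ?_
  have hDp : D * p ≤ D :=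
    hDmax _ (Nat.mul_dvd_of_dvd_div hD hpn) (hDt.mul_left (hDt.coprime_dvd_left hpD))
  have hD0 : 0 < D := Nat.pos_of_dvd_of_pos hD (Nat.pos_of_ne_zero hn)
  exact (lt_mul_of_one_lt_right hD0 hp.one_lt).not_ge hDp

theorem dvd_orderOf_mul_iff {G : Type*} [Monoid G] {u v : G} {t : ℕ} (huv : Commute u v)
    (hcop : (orderOf u).Coprime (orderOf v)) (hvt : (orderOf v).Coprime t) :
    t ∣ orderOf (u * v) ↔ t ∣ orderOf u := by
  rw [huv.orderOf_mul_eq_mul_orderOf_of_coprime hcop]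
  exact hvt.symm.dvd_mul_right

theorem weisner_multiple_general (G : Type*) [Group G] [Fintype G] (t : ℕ)
    (D : ℕ) (hD : D ∣ Fintype.card G) (hDt : Nat.Coprime D t)
    (hDmax : ∀ d, d ∣ Fintype.card G → Nat.Coprime d t → d ≤ D) :
    Nat.card {g : G // t ∣ orderOf g} = 0 ∨ D ∣ Nat.card {g : G // t ∣ orderOf g} := by
  classical
  right
  rw [← Nat.card_eq_fintype_card] at hD hDmax
  have hcop := Nat.coprime_div_of_maximal Nat.card_pos.ne' hD hDt hDmax
  have hcard : Nat.card G / D * D = Nat.card G := Nat.div_mul_cancel hD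
  have hG (x : G) : x ^ (Nat.card G / D * D) = 1 := by rw [hcard, pow_card_eq_one']
  rw [card_eq_sum_card_centralizer hcop hG (Q := fun u => t ∣ orderOf u)
    fun u v huv hu hv => dvd_orderOf_mul_iff huv
      (hcop.of_dvd (orderOf_dvd_of_pow_eq_one hu) (orderOf_dvd_of_pow_eq_one hv))
      (hDt.coprime_dvd_left (orderOf_dvd_of_pow_eq_one hv))]
  refine (Nat.dvd_gcd dvd_rfl hD).trans <|
    gcd_dvd_sum_card_centralizer _ (fun u w huw hu => ⟨?_, ?_⟩) fun u _ => ?_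
  · exact huw.pow_eq_one hu.1
  · rw [← huw.orderOf_eq]; exact hu.2
  · refine gcd_dvd_card_pow_eq_one hcop ?_
    rw [hcard]
    exact card_subgroup_dvd_card _

/-- Weisner's theorem: in a finite group `G` of order `n`, the number of elements whose
order is a multiple of `t` is either zero or a multiple of the greatest divisor `D` of
`n` that is coprime to `t`. -/
theorem weisner_multiple (G : Type*) [Group G] [Fintype G] (t : ℕ) (ht : 0 < t)
    (D : ℕ) (hD : D ∣ Fintype.card G) (hDt : Nat.Coprime D t)
    (hDmax : ∀ d, d ∣ Fintype.card G → Nat.Coprime d t → d ≤ D) :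
    Nat.card {g : G // t ∣ orderOf g} = 0 ∨ D ∣ Nat.card {g : G // t ∣ orderOf g} :=
  weisner_multiple_general G t D hD hDt hDmax
end

section
/- Let G be a finite group in which any two distinct Sylow p-subgroups intersect trivially, let P be a Sylow p-subgroup, and let k be the number of elements of order d in P for some fixed d > 1 dividing |P|. Then the number of elements of order d in G equals k · |G : N_G(P)|. -/
/-!
An element of order `d > 1` dividing `|P|` generates a nontrivial `p`-group, so it lies in some
Sylow `p`-subgroup, and by the trivial-intersection hypothesis in exactly one. The elements of
order `d` are therefore partitioned among the `|G : N_G(P)|` Sylow `p`-subgroups, each of which,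
being isomorphic to `P`, contains exactly `k` of them.
-/

theorem Nat.card_subtype_eq_sum_of_existsUnique_mem {α ι : Type*} [Finite α] [Fintype ι]
    {q : α → Prop} (s : ι → Set α) (h : ∀ a, q a → ∃! i, a ∈ s i) :
    Nat.card {a // q a} = ∑ i, Nat.card {x : s i // q x} := by
  let e := Set.sigmaEquiv (fun i => {b : {a // q a} | (b : α) ∈ s i}) fun b => h b b.2
  rw [← Nat.card_congr e, Nat.card_sigma]
  refine Finset.sum_congr rfl fun i _ => Nat.card_congr ?_
  exact (Equiv.subtypeSubtypeEquivSubtypeInter q (· ∈ s i)).trans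
    ((Equiv.subtypeEquivRight fun _ => and_comm).trans
      (Equiv.subtypeSubtypeEquivSubtypeInter (· ∈ s i) q).symm)

theorem MulEquiv.card_orderOf_eq {G H : Type*} [Monoid G] [Monoid H] (e : G ≃* H) (d : ℕ) :
    Nat.card {y : H // orderOf y = d} = Nat.card {x : G // orderOf x = d} :=
  Nat.card_congr (e.toEquiv.subtypeEquiv fun x => by simp [MulEquiv.orderOf_eq]).symm

theorem Sylow.card_orderOf_eq {G : Type*} [Group G] {p : ℕ} [Fact p.Prime] [Finite (Sylow p G)]
    (P Q : Sylow p G) (d : ℕ) :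
    Nat.card {x : (Q : Subgroup G) // orderOf x = d} =
      Nat.card {x : (P : Subgroup G) // orderOf x = d} :=
  (P.equiv Q).card_orderOf_eq d

theorem Subgroup.eq_of_mem_of_pairwise_inf_eq_bot {G ι : Type*} [Group G] {H : ι → Subgroup G}
    (hH : Pairwise fun i j => H i ⊓ H j = ⊥) {g : G} (hg : g ≠ 1) {i j : ι}
    (hi : g ∈ H i) (hj : g ∈ H j) : i = j := by
  by_contra hij
  have hg' : g ∈ H i ⊓ H j := ⟨hi, hj⟩
  rw [hH hij, Subgroup.mem_bot] at hg'
  exact hg hg'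

theorem Sylow.exists_mem_of_orderOf_dvd_pow {G : Type*} [Group G] {p : ℕ} {g : G} {n : ℕ}
    (h : orderOf g ∣ p ^ n) : ∃ Q : Sylow p G, g ∈ Q := by
  have hg : IsPGroup p (Subgroup.zpowers g) :=
    IsPGroup.of_card_dvd_pow (n := n) (by rwa [Nat.card_zpowers])
  obtain ⟨Q, hQ⟩ := hg.exists_le_sylow
  exact ⟨Q, hQ (Subgroup.mem_zpowers g)⟩

/-- In a finite group whose Sylow `p`-subgroups pairwise intersect trivially, if a Sylow
`p`-subgroup `P` contains exactly `k` elements of order `d` (where `d > 1` divides `|P|`),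
then `G` contains exactly `k · |G : N_G(P)|` elements of order `d`. -/
theorem card_orderOf_eq_of_TI_sylow (G : Type*) [Group G] [Fintype G] (p : ℕ) [Fact p.Prime]
    (P : Sylow p G)
    (hTI : ∀ Q R : Sylow p G, Q ≠ R → (Q : Subgroup G) ⊓ (R : Subgroup G) = ⊥)
    (d k : ℕ) (hd : 1 < d) (hdvd : d ∣ Nat.card (P : Subgroup G))
    (hk : k = Nat.card {x : (P : Subgroup G) // orderOf x = d}) :
    Nat.card {g : G // orderOf g = d} = k * (Subgroup.normalizer ((P : Subgroup G) : Set G)).index := by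
  obtain ⟨n, hP⟩ := IsPGroup.iff_card.mp P.isPGroup'
  have hmem : ∀ g : G, orderOf g = d → ∃! Q : Sylow p G, g ∈ Q := by
    intro g hg
    have hg1 : g ≠ 1 := by rintro rfl; rw [orderOf_one] at hg; omega
    obtain ⟨Q, hQ⟩ := Sylow.exists_mem_of_orderOf_dvd_pow (hg ▸ hP ▸ hdvd)
    exact ⟨Q, hQ, fun R hR => Subgroup.eq_of_mem_of_pairwise_inf_eq_bot hTI hg1 hR hQ⟩
  calc Nat.card {g : G // orderOf g = d}
      = ∑ Q : Sylow p G, Nat.card {x : (Q : Subgroup G) // orderOf x = d} := by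
        simp_rw [← Subgroup.orderOf_coe]
        exact Nat.card_subtype_eq_sum_of_existsUnique_mem (fun Q : Sylow p G => (Q : Set G)) hmem
    _ = Nat.card (Sylow p G) * k := by
        simp [hk, Sylow.card_orderOf_eq P, Nat.card_eq_fintype_card]
    _ = k * (Subgroup.normalizer ((P : Subgroup G) : Set G)).index := by
        rw [P.card_eq_index_normalizer, mul_comm, Sylow.coe_coe]
end

section
/- Let F be a finite field of characteristic 3 and let θ be a field automorphism of F. Define on F³ the multiplication (t₁,u₁,v₁)·(t₂,u₂,v₂) = (t₁+t₂, u₁+u₂−t₁·t₂^(3θ), v₁+v₂−t₂u₁+t₁·t₂^(3θ+1)−t₁²·t₂^(3θ)), where x^(3θ) means θ(x)³ etc. Then the cube of (t,u,v) equals (0, 0, −t^(3θ+2)), i.e. (3t, 3u−3t^(3θ+1), 3v−3tu−t^(3θ+2)) = (0,0,−t^(3θ+2)). -/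
/-- In the coordinatized Sylow 3-subgroup of the small Ree group: over a field `F` of
characteristic 3 with field automorphism `θ`, with multiplication
`(t₁,u₁,v₁)·(t₂,u₂,v₂) = (t₁+t₂, u₁+u₂−t₁t₂^(3θ), v₁+v₂−t₂u₁+t₁t₂^(3θ+1)−t₁²t₂^(3θ))`,
the cube of `(t,u,v)` equals `(0, 0, −t^(3θ+2))`, where `x^(3θ) = θ(x)³`. -/
theorem ree_sylow3_cube (F : Type*) [Field F] [CharP F 3] (θ : F ≃+* F)
    (mul : F × F × F → F × F × F → F × F × F)
    (hmul : ∀ t₁ u₁ v₁ t₂ u₂ v₂ : F,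
      mul (t₁, u₁, v₁) (t₂, u₂, v₂) =
        (t₁ + t₂, u₁ + u₂ - t₁ * (θ t₂) ^ 3,
          v₁ + v₂ - t₂ * u₁ + t₁ * ((θ t₂) ^ 3 * t₂) - t₁ ^ 2 * (θ t₂) ^ 3))
    (t u v : F) :
    mul (mul (t, u, v) (t, u, v)) (t, u, v) = (0, 0, -((θ t) ^ 3 * t ^ 2)) := by
  have h3 : (3 : F) = 0 := by exact_mod_cast CharP.cast_eq_zero F 3
  rw [hmul, hmul]
  refine Prod.ext ?_ (Prod.ext ?_ ?_)
  · show t + t + t = 0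
    linear_combination t * h3
  · show u + u - t * θ t ^ 3 + u - (t + t) * θ t ^ 3 = 0
    linear_combination (u - t * θ t ^ 3) * h3
  · show v + v - t * u + t * (θ t ^ 3 * t) - t ^ 2 * θ t ^ 3 + v -
        t * (u + u - t * θ t ^ 3) + (t + t) * (θ t ^ 3 * t) - (t + t) ^ 2 * θ t ^ 3 =
        -(θ t ^ 3 * t ^ 2)
    linear_combination (v - t * u) * h3
end

section
/- Let q = 3^(2n+1) with n ≥ 0, and let F_q be the field with q elements with θ: x ↦ x^(3ⁿ). In the group on F_q³ with the multiplication of the Sylow 3-subgroup of ²G₂(q), the number of elements of order exactly 3 is q² − 1. -/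
/-!
In characteristic 3 the cube of `(t, u, v)` is `(0, 0, -t² θ(t)³)`, and `θ(t) = t^(3ⁿ)` vanishes
only at `t = 0`. So the elements of order 3 are exactly the nonzero `(0, u, v)`: there are `q² − 1`.
-/

/-- The multiplication of the Sylow 3-subgroup of `²G₂(q)` on `R³`; the paper's `x^(3θ)` is
`(θ x) ^ 3`. -/
def reeSylowMul {R : Type*} [CommRing R] (θ : R → R) (x y : R × R × R) : R × R × R :=
  (x.1 + y.1, x.2.1 + y.2.1 - x.1 * θ y.1 ^ 3,
    x.2.2 + y.2.2 - y.1 * x.2.1 + x.1 * (θ y.1 ^ 3 * y.1) - x.1 ^ 2 * θ y.1 ^ 3)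

section ReeSylow

variable {R : Type*} [CommRing R] (θ : R → R)

theorem reeSylowMul_cube (t u v : R) :
    reeSylowMul θ (reeSylowMul θ (t, u, v) (t, u, v)) (t, u, v) =
      (3 * t, 3 * (u - t * θ t ^ 3), 3 * (v - t * u) - t ^ 2 * θ t ^ 3) := by
  simp only [reeSylowMul, Prod.mk.injEq]
  refine ⟨by ring, by ring, by ring⟩

theorem reeSylowMul_cube_of_three_eq_zero (h3 : (3 : R) = 0) (t u v : R) :
    reeSylowMul θ (reeSylowMul θ (t, u, v) (t, u, v)) (t, u, v) = (0, 0, -(t ^ 2 * θ t ^ 3)) := by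
  simp [reeSylowMul_cube, h3]

theorem reeSylowMul_cube_eq_zero_iff [IsDomain R] (h3 : (3 : R) = 0)
    (hθ : ∀ t, θ t = 0 → t = 0) (x : R × R × R) :
    reeSylowMul θ (reeSylowMul θ x x) x = 0 ↔ x.1 = 0 := by
  obtain ⟨t, u, v⟩ := x
  rw [reeSylowMul_cube_of_three_eq_zero θ h3]
  constructor
  · intro h
    have ht : t ^ 2 * θ t ^ 3 = 0 := neg_eq_zero.mp (congrArg (·.2.2) h)
    rcases mul_eq_zero.mp ht with ht | ht
    · exact pow_eq_zero_iff two_ne_zero |>.mp ht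
    · exact hθ t (pow_eq_zero_iff three_ne_zero |>.mp ht)
  · rintro rfl
    simp

end ReeSylow

theorem three_eq_zero_of_card_eq_three_pow {F : Type*} [Field F] [Fintype F] {k : ℕ} (hk : k ≠ 0)
    (hF : Fintype.card F = 3 ^ k) : (3 : F) = 0 := by
  have h := FiniteField.cast_card_eq_zero F
  rw [hF, Nat.cast_pow, Nat.cast_ofNat] at h
  exact pow_eq_zero_iff hk |>.mp h

theorem Nat.card_subtype_ne {β : Type*} [Finite β] (b : β) :
    Nat.card {y : β // y ≠ b} = Nat.card β - 1 := by
  have := Fintype.ofFinite β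
  classical
  rw [Nat.card_eq_fintype_card, Fintype.card_subtype_compl, Fintype.card_subtype_eq,
    Nat.card_eq_fintype_card]

theorem Nat.card_prod_fst_eq_zero_and_ne_zero {α β : Type*} [Zero α] [Zero β] [Finite β] :
    Nat.card {x : α × β // x.1 = 0 ∧ x ≠ 0} = Nat.card β - 1 := by
  rw [← Nat.card_subtype_ne (0 : β)]
  refine Nat.card_congr
    { toFun := fun x => ⟨x.1.2, fun h => x.2.2 (Prod.ext x.2.1 h)⟩
      invFun := fun y => ⟨(0, y.1), rfl, fun h => y.2 (congrArg Prod.snd h)⟩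
      left_inv := fun x => Subtype.ext (Prod.ext x.2.1.symm rfl)
      right_inv := fun y => rfl }

/-- In the Sylow 3-subgroup of `²G₂(q)` realized on `F_q³` (with `q = 3^(2n+1)` and
`θ : x ↦ x^(3ⁿ)`), the number of elements of order exactly 3 (i.e. with cube equal to the
identity `(0,0,0)` but not the identity) is `q² − 1`. -/
theorem ree_sylow3_card_order_three (n q : ℕ) (hq : q = 3 ^ (2 * n + 1))
    (F : Type*) [Field F] [Fintype F] (hF : Fintype.card F = q)
    (θ : F → F) (hθ : ∀ x, θ x = x ^ 3 ^ n)
    (mul : F × F × F → F × F × F → F × F × F)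
    (hmul : ∀ t₁ u₁ v₁ t₂ u₂ v₂ : F,
      mul (t₁, u₁, v₁) (t₂, u₂, v₂) =
        (t₁ + t₂, u₁ + u₂ - t₁ * (θ t₂) ^ 3,
          v₁ + v₂ - t₂ * u₁ + t₁ * ((θ t₂) ^ 3 * t₂) - t₁ ^ 2 * (θ t₂) ^ 3)) :
    Nat.card {x : F × F × F // mul (mul x x) x = (0, 0, 0) ∧ x ≠ (0, 0, 0)} = q ^ 2 - 1 := by
  have h3 : (3 : F) = 0 := three_eq_zero_of_card_eq_three_pow (Nat.succ_ne_zero _) (hF.trans hq)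
  have hmul_eq : mul = reeSylowMul θ := by
    funext ⟨t₁, u₁, v₁⟩ ⟨t₂, u₂, v₂⟩
    exact hmul t₁ u₁ v₁ t₂ u₂ v₂
  have hθ_zero (t : F) (ht : θ t = 0) : t = 0 := pow_eq_zero_iff (by positivity) |>.mp (hθ t ▸ ht)
  have horder (x : F × F × F) :
      (mul (mul x x) x = (0, 0, 0) ∧ x ≠ (0, 0, 0)) ↔ (x.1 = 0 ∧ x ≠ 0) := by
    rw [Prod.mk_zero_zero, Prod.mk_zero_zero, hmul_eq,
      reeSylowMul_cube_eq_zero_iff θ h3 hθ_zero]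
  rw [Nat.card_congr (Equiv.subtypeEquivRight horder), Nat.card_prod_fst_eq_zero_and_ne_zero,
    Nat.card_prod, Nat.card_eq_fintype_card, hF, sq]
end
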